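/- arXiv:2501.12000 — 3 statements merged into one kernel-verified Lean document; each statement's English description precedes it below -/
import Mathlib

section
/- Let H^C and H^B be Hermitian operators on a finite-dimensional complex Hilbert space ℋ, let ψ₀ ∈ ℋ be a unit vector, set ψ(t) = exp(−i t H^C) ψ₀, and let E(t) = ⟨ψ(t), H^B ψ(t)⟩. Then the instantaneous charging power P(t) = d/dt E(t) satisfies |P(t)| ≤ ‖[H^C, H^B]‖ ≤ 2 ‖H^C‖ · ‖H^B‖ for every t ∈ ℝ. -/
/-!
Along the Schrödinger evolution `ψ' = -i H^C ψ` the derivative of `⟨ψ, H^B ψ⟩` is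
`⟨-i H^C ψ, H^B ψ⟩ + ⟨ψ, -i H^B H^C ψ⟩ = i ⟨ψ, [H^C, H^B] ψ⟩`, using that `H^C` is self-adjoint.
Since `exp (-i t H^C)` is unitary, `‖ψ(t)‖ = 1`, and Cauchy–Schwarz bounds the right-hand side
by `‖[H^C, H^B]‖`. The second inequality is the triangle inequality.
-/

open NormedSpace Complex
open scoped InnerProductSpace

theorem norm_commutator_le {R : Type*} [NonUnitalSeminormedRing R] (a b : R) :
    ‖a * b - b * a‖ ≤ 2 * ‖a‖ * ‖b‖ :=
  calc ‖a * b - b * a‖ ≤ ‖a * b‖ + ‖b * a‖ := norm_sub_le _ _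
    _ ≤ ‖a‖ * ‖b‖ + ‖b‖ * ‖a‖ := add_le_add (norm_mul_le _ _) (norm_mul_le _ _)
    _ = 2 * ‖a‖ * ‖b‖ := by ring

section Evolution

variable {E : Type*} [NormedAddCommGroup E]

theorem hasDerivAt_exp_neg_I_mul_smul_apply [NormedSpace ℂ E] [CompleteSpace E]
    (H : E →L[ℂ] E) (x : E) (t : ℝ) :
    HasDerivAt (fun s : ℝ => exp ((-(I * s)) • H) x)
      ((-I) • H (exp ((-(I * t)) • H) x)) t := by
  have hsmul : ∀ z : ℂ, (-(I * z)) • H = z • (-I) • H := fun z => by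
    rw [smul_smul]; ring_nf
  have hexp := (hasDerivAt_exp_smul_const' ((-I) • H) (t : ℂ)).clm_apply (hasDerivAt_const _ x)
  simp only [← hsmul, mul_apply_eq_comp, map_zero, add_zero] at hexp
  simpa [Function.comp_def] using hexp.scomp t ofRealCLM.hasDerivAt

variable [InnerProductSpace ℂ E]

theorem HasDerivAt.re_inner_apply_self {ψ : ℝ → E} {v : E} {t : ℝ} (hψ : HasDerivAt ψ v t)
    (A : E →L[ℂ] E) :
    HasDerivAt (fun s => (⟪ψ s, A (ψ s)⟫_ℂ).re)
      (⟪v, A (ψ t)⟫_ℂ + ⟪ψ t, A v⟫_ℂ).re t := by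
  have hAψ : HasDerivAt (fun s => A (ψ s)) (A v) t :=
    (A.restrictScalars ℝ).hasFDerivAt.comp_hasDerivAt t hψ
  simpa [Function.comp_def, add_comm] using
    reCLM.hasFDerivAt.comp_hasDerivAt t (hψ.inner ℂ hAψ)

theorem abs_re_I_mul_inner_apply_le (A : E →L[ℂ] E) (x : E) :
    |(I * ⟪x, A x⟫_ℂ).re| ≤ ‖A‖ * ‖x‖ ^ 2 :=
  calc |(I * ⟪x, A x⟫_ℂ).re|
      ≤ ‖I * ⟪x, A x⟫_ℂ‖ := abs_re_le_norm _
    _ = ‖⟪x, A x⟫_ℂ‖ := by rw [norm_mul, norm_I, one_mul]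
    _ ≤ ‖x‖ * ‖A x‖ := norm_inner_le_norm _ _
    _ ≤ ‖x‖ * (‖A‖ * ‖x‖) := by gcongr; exact A.le_opNorm x
    _ = ‖A‖ * ‖x‖ ^ 2 := by ring

variable [CompleteSpace E]

theorem IsSelfAdjoint.inner_neg_I_smul_add_inner_neg_I_smul {H : E →L[ℂ] E}
    (hH : IsSelfAdjoint H) (A : E →L[ℂ] E) (x : E) :
    ⟪(-I) • H x, A x⟫_ℂ + ⟪x, A ((-I) • H x)⟫_ℂ =
      I * ⟪x, (H * A - A * H) x⟫_ℂ := by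
  have hHA : ⟪H x, A x⟫_ℂ = ⟪x, (H * A) x⟫_ℂ := by
    rw [← hH.adjoint_eq, ContinuousLinearMap.adjoint_inner_left, hH.adjoint_eq]; rfl
  simp only [inner_smul_left, map_smul, inner_smul_right, hHA, sub_apply,
    inner_sub_right, mul_apply_eq_comp, map_neg, conj_I]
  ring

theorem IsSelfAdjoint.norm_exp_neg_I_mul_smul_apply {H : E →L[ℂ] E}
    (hH : IsSelfAdjoint H) (t : ℝ) (x : E) :
    ‖NormedSpace.exp ((-(I * t)) • H) x‖ = ‖x‖ := by
  let +nondep : NormedAlgebra ℚ (E →L[ℂ] E) := .restrictScalars ℚ ℂ _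
  have hskew : -(I * t) ∈ skewAdjoint ℂ := by
    simp [skewAdjoint.mem_iff, Complex.conj_ofReal]
  have hunitary := exp_mem_unitary_of_mem_skewAdjoint (hH.smul_mem_skewAdjoint hskew)
  exact ContinuousLinearMap.norm_map_of_mem_unitary hunitary x

end Evolution

theorem instantaneous_power_bound_general
    {E : Type*} [NormedAddCommGroup E] [InnerProductSpace ℂ E] [FiniteDimensional ℂ E]
    (HC HB : E →L[ℂ] E) (hHC : IsSelfAdjoint HC)
    (ψ₀ : E) (hψ₀ : ‖ψ₀‖ = 1)
    (ψ : ℝ → E) (hψ : ∀ t : ℝ, ψ t = NormedSpace.exp ((-(Complex.I * t)) • HC) ψ₀)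
    (t : ℝ) (P : ℝ)
    (hP : HasDerivAt (fun s : ℝ => (inner ℂ (ψ s) (HB (ψ s)) : ℂ).re) P t) :
    |P| ≤ ‖HC * HB - HB * HC‖ ∧ ‖HC * HB - HB * HC‖ ≤ 2 * ‖HC‖ * ‖HB‖ := by
  obtain rfl : ψ = fun s : ℝ => exp ((-(I * s)) • HC) ψ₀ := funext hψ
  have hP_eq := hP.unique <|
    HasDerivAt.re_inner_apply_self (hasDerivAt_exp_neg_I_mul_smul_apply HC ψ₀ t) HB
  rw [hHC.inner_neg_I_smul_add_inner_neg_I_smul] at hP_eq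
  refine ⟨?_, norm_commutator_le HC HB⟩
  calc |P| ≤ ‖HC * HB - HB * HC‖ * ‖exp ((-(I * t)) • HC) ψ₀‖ ^ 2 :=
        hP_eq ▸ abs_re_I_mul_inner_apply_le _ _
    _ = ‖HC * HB - HB * HC‖ := by rw [hHC.norm_exp_neg_I_mul_smul_apply, hψ₀, one_pow, mul_one]

/-- The instantaneous charging power `P(t) = d/dt ⟨ψ(t), H^B ψ(t)⟩` satisfies
`|P(t)| ≤ ‖[H^C, H^B]‖ ≤ 2 ‖H^C‖ ‖H^B‖`. -/
theorem instantaneous_power_bound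
    {E : Type*} [NormedAddCommGroup E] [InnerProductSpace ℂ E] [FiniteDimensional ℂ E]
    (HC HB : E →L[ℂ] E) (hHC : IsSelfAdjoint HC) (hHB : IsSelfAdjoint HB)
    (ψ₀ : E) (hψ₀ : ‖ψ₀‖ = 1)
    (ψ : ℝ → E) (hψ : ∀ t : ℝ, ψ t = NormedSpace.exp ((-(Complex.I * t)) • HC) ψ₀)
    (t : ℝ) (P : ℝ)
    (hP : HasDerivAt (fun s : ℝ => (inner ℂ (ψ s) (HB (ψ s)) : ℂ).re) P t) :
    |P| ≤ ‖HC * HB - HB * HC‖ ∧ ‖HC * HB - HB * HC‖ ≤ 2 * ‖HC‖ * ‖HB‖ :=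
  instantaneous_power_bound_general HC HB hHC ψ₀ hψ₀ ψ hψ t P hP
end

section
/- Let H be a Hermitian operator on a finite-dimensional complex Hilbert space ℋ, let O be any operator on ℋ, let E ≤ E' be real numbers, and let Π_{[E',∞)} and Π_{(−∞,E]} denote the orthogonal spectral projections of H onto the span of its eigenvectors with eigenvalue ≥ E' and ≤ E respectively. Then for every p ≥ 0: ‖Π_{[E',∞)} O Π_{(−∞,E]}‖ ≤ e^{−p(E'−E)} · ‖e^{pH} O e^{−pH}‖. -/
/-! Conjugating by `e^{pH}` factors `Π_{[E',∞)} O Π_{(−∞,E]}` as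
`(Π_{[E',∞)} e^{−pH}) (e^{pH} O e^{−pH}) (e^{pH} Π_{(−∞,E]})`. Both outer factors are diagonal in an
orthonormal eigenbasis of `H`, with entries `e^{−pμ}` (`μ ≥ E'`) resp. `e^{pμ}` (`μ ≤ E`) and `0`
elsewhere, so their norms are at most `e^{−pE'}` and `e^{pE}`. -/

/-- The orthogonal projection onto the span of the eigenvectors of `H` whose eigenvalues lie
in the set `I ⊆ ℝ`. -/
noncomputable def spectralProj {E : Type*} [NormedAddCommGroup E] [InnerProductSpace ℂ E]
    [FiniteDimensional ℂ E] (H : E →L[ℂ] E) (I : Set ℝ) : E →L[ℂ] E :=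
  letI V : Submodule ℂ E :=
    ⨆ (μ : ℝ) (_ : μ ∈ I), Module.End.eigenspace (H : E →ₗ[ℂ] E) (μ : ℂ)
  V.subtypeL ∘L V.orthogonalProjectionOnto

open NormedSpace Module.End
open scoped InnerProductSpace

theorem NormedSpace.exp_apply_of_apply_eq_smul {𝕂 F : Type*} [RCLike 𝕂] [NormedAddCommGroup F]
    [NormedSpace 𝕂 F] [CompleteSpace F] {A : F →L[𝕂] F} {x : F} {a : 𝕂} (h : A x = a • x) :
    exp A x = exp a • x := by
  have hpow (n : ℕ) : (A ^ n) x = a ^ n • x := by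
    induction n with
    | zero => simp
    | succ n ih => rw [pow_succ', mul_apply_eq_comp, ih, map_smul, h, smul_smul, pow_succ]
  have hsum := (ContinuousLinearMap.apply 𝕂 F x).map_tsum (expSeries_summable' (𝕂 := 𝕂) A)
  simp only [ContinuousLinearMap.apply_apply, smul_apply, hpow, smul_smul] at hsum
  rw [exp_eq_tsum 𝕂, exp_eq_tsum 𝕂, hsum, ← (expSeries_summable' a).tsum_smul_const]
  simp only [smul_eq_mul]

-- `exp_add_of_commute` needs `NormedAlgebra ℚ 𝔸`, which operator algebras over `ℂ` do not carry.
theorem NormedSpace.exp_neg_mul_exp (𝕂 : Type*) {𝔸 : Type*} [RCLike 𝕂] [NormedRing 𝔸]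
    [NormedAlgebra 𝕂 𝔸] [CompleteSpace 𝔸] (x : 𝔸) : exp (-x) * exp x = 1 := by
  have hx (y : 𝔸) : y ∈ Metric.eball 0 (expSeries 𝕂 𝔸).radius := by
    simp [expSeries_radius_eq_top]
  rw [← exp_add_of_commute_of_mem_ball (Commute.refl x).neg_left (hx _) (hx _), neg_add_cancel,
    exp_zero]

theorem OrthonormalBasis.opNorm_le_of_apply_eq_smul {𝕜 ι F : Type*} [RCLike 𝕜] [Fintype ι]
    [NormedAddCommGroup F] [InnerProductSpace 𝕜 F] (b : OrthonormalBasis ι 𝕜 F) {D : F →L[𝕜] F}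
    {d : ι → 𝕜} (hD : ∀ i, D (b i) = d i • b i) {M : ℝ} (hM0 : 0 ≤ M) (hM : ∀ i, ‖d i‖ ≤ M) :
    ‖D‖ ≤ M := by
  classical
  refine D.opNorm_le_bound hM0 fun x => ?_
  have hcoord (i : ι) : ⟪b i, D x⟫_𝕜 = ⟪b i, x⟫_𝕜 * d i := by
    conv_lhs => rw [← b.sum_repr' x]
    simp [hD, inner_sum, inner_smul_right, b.inner_eq_ite]
  have hsq : ‖D x‖ ^ 2 ≤ (M * ‖x‖) ^ 2 := by
    rw [← b.sum_sq_norm_inner_right, mul_pow, ← b.sum_sq_norm_inner_right x, Finset.mul_sum]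
    gcongr with i
    rw [hcoord, norm_mul, mul_pow, mul_comm]
    gcongr
    exact hM i
  exact (sq_le_sq₀ (norm_nonneg _) (by positivity)).mp hsq

section SpectralProj

variable {𝓗 : Type*} [NormedAddCommGroup 𝓗] [InnerProductSpace ℂ 𝓗] [FiniteDimensional ℂ 𝓗]
  {H : 𝓗 →L[ℂ] 𝓗} {I : Set ℝ} {μ : ℝ} {v : 𝓗}

theorem spectralProj_eq_starProjection (H : 𝓗 →L[ℂ] 𝓗) (I : Set ℝ) :
    spectralProj H I = (⨆ (μ : ℝ) (_ : μ ∈ I), eigenspace (H : 𝓗 →ₗ[ℂ] 𝓗) (μ : ℂ)).starProjection :=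
  rfl

theorem spectralProj_apply_of_mem (hv : v ∈ eigenspace (H : 𝓗 →ₗ[ℂ] 𝓗) (μ : ℂ)) (hμ : μ ∈ I) :
    spectralProj H I v = v := by
  rw [spectralProj_eq_starProjection, Submodule.starProjection_eq_self_iff]
  exact Submodule.mem_iSup_of_mem μ (Submodule.mem_iSup_of_mem hμ hv)

theorem spectralProj_apply_of_notMem (hH : IsSelfAdjoint H)
    (hv : v ∈ eigenspace (H : 𝓗 →ₗ[ℂ] 𝓗) (μ : ℂ)) (hμ : μ ∉ I) :
    spectralProj H I v = 0 := by
  have hperp : ⨆ (ν : ℝ) (_ : ν ∈ I), eigenspace (H : 𝓗 →ₗ[ℂ] 𝓗) (ν : ℂ) ≤ (ℂ ∙ v)ᗮ := by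
    refine iSup₂_le fun ν hν w hw => Submodule.mem_orthogonal_singleton_iff_inner_right.mpr ?_
    have hne : (μ : ℂ) ≠ ν := fun h => hμ (Complex.ofReal_injective h ▸ hν)
    exact hH.isSymmetric.orthogonalFamily_eigenspaces hne ⟨v, hv⟩ ⟨w, hw⟩
  rw [spectralProj_eq_starProjection, Submodule.starProjection_apply_eq_zero_iff,
    Submodule.mem_orthogonal']
  exact fun u hu => Submodule.mem_orthogonal_singleton_iff_inner_right.mp (hperp hu)

theorem exp_smul_apply_of_mem_eigenspace (hv : v ∈ eigenspace (H : 𝓗 →ₗ[ℂ] 𝓗) (μ : ℂ)) (c : ℝ) :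
    exp ((c : ℂ) • H) v = (Real.exp (c * μ) : ℂ) • v := by
  have hcH : ((c : ℂ) • H) v = ((c * μ : ℝ) : ℂ) • v := by
    rw [smul_apply, ← ContinuousLinearMap.coe_coe, mem_eigenspace_iff.mp hv, smul_smul,
      Complex.ofReal_mul]
  rw [exp_apply_of_apply_eq_smul hcH, ← Complex.exp_eq_exp_ℂ, Complex.ofReal_exp]

theorem IsSelfAdjoint.opNorm_le_of_apply_eigenvector (hH : IsSelfAdjoint H) {D : 𝓗 →L[ℂ] 𝓗}
    (f : ℝ → ℂ) (hD : ∀ (μ : ℝ) v, v ∈ eigenspace (H : 𝓗 →ₗ[ℂ] 𝓗) (μ : ℂ) → D v = f μ • v) {M : ℝ}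
    (hM0 : 0 ≤ M) (hM : ∀ μ, ‖f μ‖ ≤ M) : ‖D‖ ≤ M :=
  let hT := hH.isSymmetric
  (hT.eigenvectorBasis rfl).opNorm_le_of_apply_eq_smul
    (fun i => hD _ _ (hT.hasEigenvector_eigenvectorBasis rfl i).1) hM0 fun _ => hM _

theorem norm_indicator_exp_le {c M : ℝ} (hM0 : 0 ≤ M) (hM : ∀ μ ∈ I, Real.exp (c * μ) ≤ M)
    (μ : ℝ) : ‖I.indicator (fun μ => (Real.exp (c * μ) : ℂ)) μ‖ ≤ M := by
  rw [norm_indicator_eq_indicator_norm]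
  refine Set.indicator_apply_le' (fun hμ => ?_) fun _ => hM0
  rw [Complex.norm_real, Real.norm_of_nonneg (Real.exp_nonneg _)]
  exact hM μ hμ

theorem norm_spectralProj_mul_exp_le (hH : IsSelfAdjoint H) (I : Set ℝ) {c M : ℝ} (hM0 : 0 ≤ M)
    (hM : ∀ μ ∈ I, Real.exp (c * μ) ≤ M) : ‖spectralProj H I * exp ((c : ℂ) • H)‖ ≤ M := by
  refine hH.opNorm_le_of_apply_eigenvector _ (fun μ v hv => ?_) hM0 (norm_indicator_exp_le hM0 hM)
  rw [mul_apply_eq_comp, exp_smul_apply_of_mem_eigenspace hv, map_smul]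
  by_cases hμ : μ ∈ I
  · rw [spectralProj_apply_of_mem hv hμ, Set.indicator_of_mem hμ]
  · rw [spectralProj_apply_of_notMem hH hv hμ, Set.indicator_of_notMem hμ, smul_zero, zero_smul]

theorem norm_exp_mul_spectralProj_le (hH : IsSelfAdjoint H) (I : Set ℝ) {c M : ℝ} (hM0 : 0 ≤ M)
    (hM : ∀ μ ∈ I, Real.exp (c * μ) ≤ M) : ‖exp ((c : ℂ) • H) * spectralProj H I‖ ≤ M := by
  refine hH.opNorm_le_of_apply_eigenvector _ (fun μ v hv => ?_) hM0 (norm_indicator_exp_le hM0 hM)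
  rw [mul_apply_eq_comp]
  by_cases hμ : μ ∈ I
  · rw [spectralProj_apply_of_mem hv hμ, Set.indicator_of_mem hμ,
      exp_smul_apply_of_mem_eigenspace hv]
  · rw [spectralProj_apply_of_notMem hH hv hμ, Set.indicator_of_notMem hμ, map_zero, zero_smul]

end SpectralProj

theorem spectral_filter_bound_general
    {𝓗 : Type*} [NormedAddCommGroup 𝓗] [InnerProductSpace ℂ 𝓗] [FiniteDimensional ℂ 𝓗]
    (H : 𝓗 →L[ℂ] 𝓗) (hH : IsSelfAdjoint H) (O : 𝓗 →L[ℂ] 𝓗)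
    (E E' : ℝ) (p : ℝ) (hp : 0 ≤ p) :
    ‖spectralProj H (Set.Ici E') * O * spectralProj H (Set.Iic E)‖ ≤
      Real.exp (-p * (E' - E)) *
        ‖NormedSpace.exp ((p : ℂ) • H) * O * NormedSpace.exp (-(p : ℂ) • H)‖ := by
  set U := exp ((p : ℂ) • H)
  set V := exp (-(p : ℂ) • H)
  have hVU : V * U = 1 := by
    simp only [V, U, neg_smul]
    exact exp_neg_mul_exp ℂ _
  have hV : ‖spectralProj H (Set.Ici E') * V‖ ≤ Real.exp (-p * E') := by
    simpa only [Complex.ofReal_neg] using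
      norm_spectralProj_mul_exp_le hH (Set.Ici E') (c := -p) (Real.exp_nonneg (-p * E'))
        fun μ hμ => Real.exp_le_exp.mpr (by nlinarith [Set.mem_Ici.mp hμ])
  have hU : ‖U * spectralProj H (Set.Iic E)‖ ≤ Real.exp (p * E) :=
    norm_exp_mul_spectralProj_le hH (Set.Iic E) (Real.exp_nonneg _)
      fun μ hμ => Real.exp_le_exp.mpr (by nlinarith [Set.mem_Iic.mp hμ])
  calc ‖spectralProj H (Set.Ici E') * O * spectralProj H (Set.Iic E)‖
      = ‖(spectralProj H (Set.Ici E') * V) * (U * O * V) * (U * spectralProj H (Set.Iic E))‖ := by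
        simp only [mul_assoc, ← mul_assoc V U, hVU, one_mul]
    _ ≤ Real.exp (-p * E') * ‖U * O * V‖ * Real.exp (p * E) := by
        grw [norm_mul₃_le, hV, hU]
    _ = Real.exp (-p * (E' - E)) * ‖U * O * V‖ := by
        rw [mul_right_comm, ← Real.exp_add]
        ring_nf

/-- For a Hermitian `H`, any operator `O`, `E ≤ E'` and `p ≥ 0`:
`‖Π_{[E',∞)} O Π_{(−∞,E]}‖ ≤ e^{−p(E'−E)} ‖e^{pH} O e^{−pH}‖`. -/
theorem spectral_filter_bound
    {𝓗 : Type*} [NormedAddCommGroup 𝓗] [InnerProductSpace ℂ 𝓗] [FiniteDimensional ℂ 𝓗]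
    (H : 𝓗 →L[ℂ] 𝓗) (hH : IsSelfAdjoint H) (O : 𝓗 →L[ℂ] 𝓗)
    (E E' : ℝ) (hEE' : E ≤ E') (p : ℝ) (hp : 0 ≤ p) :
    ‖spectralProj H (Set.Ici E') * O * spectralProj H (Set.Iic E)‖ ≤
      Real.exp (-p * (E' - E)) *
        ‖NormedSpace.exp ((p : ℂ) • H) * O * NormedSpace.exp (-(p : ℂ) • H)‖ :=
  spectral_filter_bound_general H hH O E E' p hp
end

section
/- Let ℋ be a finite-dimensional complex Hilbert space, ε > 0, L a nonnegative integer, and let (Π_m)_{m ∈ ℤ} be a family of pairwise orthogonal projections on ℋ, only finitely many nonzero, with Σ_m Π_m = 1. Define H' = Σ_m (m + 1/2)·ε·Π_m. If an operator K on ℋ satisfies Π_m K Π_{m'} = 0 whenever |m − m'| > L (a banded condition), then ‖[K, H']‖ ≤ ε·L·(L+1)·‖K‖. -/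
/-!
Write `K_d = ∑ m, Π_m K Π_{m+d}` for the `d`-th block diagonal of `K`. Since
`Π_m [K, H'] Π_{m+d} = d ε Π_m K Π_{m+d}` and the band condition kills the blocks with `|d| > L`,
`[K, H'] = ε ∑_{|d| ≤ L} d K_d`. Each block diagonal is a contraction: by Pythagoras for the
orthogonal ranges of the `Π_m` and Bessel's inequality for the `Π_{m+d}`,
`‖K_d x‖² = ∑ m, ‖Π_m K Π_{m+d} x‖² ≤ ‖K‖² ∑ m, ‖Π_{m+d} x‖² ≤ ‖K‖² ‖x‖²`.
Hence `‖[K, H']‖ ≤ ε ‖K‖ ∑_{|d| ≤ L} |d| = ε L (L + 1) ‖K‖`.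
-/

open scoped InnerProductSpace
open Finset

section Projections

variable {𝕜 E ι : Type*} [RCLike 𝕜] [NormedAddCommGroup E] [InnerProductSpace 𝕜 E]

theorem norm_sum_sq_eq_sum_norm_sq_of_pairwise (s : Finset ι) {v : ι → E}
    (hv : Pairwise fun i j => ⟪v i, v j⟫_𝕜 = 0) :
    ‖∑ i ∈ s, v i‖ ^ 2 = ∑ i ∈ s, ‖v i‖ ^ 2 := by
  have h : ((‖∑ i ∈ s, v i‖ : ℝ) : 𝕜) ^ 2 = ∑ i ∈ s, ((‖v i‖ : ℝ) : 𝕜) ^ 2 := by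
    simp only [← inner_self_eq_norm_sq_to_K, sum_inner, inner_sum]
    exact sum_congr rfl fun i hi => sum_eq_single_of_mem i hi fun j _ hji => hv hji
  exact_mod_cast h

variable [CompleteSpace E]

theorem IsStarProjection.norm_apply_le {P : E →L[𝕜] E} (hP : IsStarProjection P) (x : E) :
    ‖P x‖ ≤ ‖x‖ := by
  simpa using P.le_of_opNorm_le (hP.norm_le _) x

theorem inner_apply_eq_zero_of_mul_eq_zero {P Q : E →L[𝕜] E} (hP : IsSelfAdjoint P)
    (hPQ : P * Q = 0) (x y : E) : ⟪P x, Q y⟫_𝕜 = 0 := by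
  rw [← ContinuousLinearMap.adjoint_inner_right, hP.adjoint_eq, ← mul_apply_eq_comp, hPQ,
    zero_apply, inner_zero_right]

namespace OrthogonalIdempotents

variable {P Q : ι → E →L[𝕜] E}

theorem pairwise_inner_apply_eq_zero (hP : OrthogonalIdempotents P)
    (hPsa : ∀ i, IsSelfAdjoint (P i)) (x : ι → E) :
    Pairwise fun i j => ⟪P i (x i), P j (x j)⟫_𝕜 = 0 :=
  fun _ _ hij => inner_apply_eq_zero_of_mul_eq_zero (hPsa _) (hP.ortho hij) _ _

theorem sum_norm_apply_sq_le (hP : OrthogonalIdempotents P) (hPsa : ∀ i, IsSelfAdjoint (P i))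
    (s : Finset ι) (x : E) : ∑ i ∈ s, ‖P i x‖ ^ 2 ≤ ‖x‖ ^ 2 := by
  have hproj : IsStarProjection (∑ i ∈ s, P i) :=
    ⟨hP.isIdempotentElem_sum, isSelfAdjoint_sum s fun i _ => hPsa i⟩
  rw [← norm_sum_sq_eq_sum_norm_sq_of_pairwise s
    (hP.pairwise_inner_apply_eq_zero hPsa fun _ => x), ← _root_.sum_apply]
  gcongr
  exact hproj.norm_apply_le x

theorem norm_sum_mul_mul_le (hP : OrthogonalIdempotents P) (hPsa : ∀ i, IsSelfAdjoint (P i))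
    (hQ : OrthogonalIdempotents Q) (hQsa : ∀ i, IsSelfAdjoint (Q i))
    (s : Finset ι) (A : E →L[𝕜] E) : ‖∑ i ∈ s, P i * A * Q i‖ ≤ ‖A‖ := by
  refine ContinuousLinearMap.opNorm_le_bound _ (norm_nonneg A) fun x => ?_
  have hsq : ‖(∑ i ∈ s, P i * A * Q i) x‖ ^ 2 ≤ (‖A‖ * ‖x‖) ^ 2 :=
    calc ‖(∑ i ∈ s, P i * A * Q i) x‖ ^ 2
        = ∑ i ∈ s, ‖P i (A (Q i x))‖ ^ 2 := by
          rw [_root_.sum_apply]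
          exact norm_sum_sq_eq_sum_norm_sq_of_pairwise s
            (hP.pairwise_inner_apply_eq_zero hPsa fun i => A (Q i x))
      _ ≤ ∑ i ∈ s, (‖A‖ * ‖Q i x‖) ^ 2 := by
          gcongr with i
          exact (IsStarProjection.norm_apply_le ⟨hP.idem i, hPsa i⟩ _).trans (A.le_opNorm _)
      _ = ‖A‖ ^ 2 * ∑ i ∈ s, ‖Q i x‖ ^ 2 := by simp only [mul_pow, mul_sum]
      _ ≤ (‖A‖ * ‖x‖) ^ 2 := by
          rw [mul_pow]
          gcongr
          exact hQ.sum_norm_apply_sq_le hQsa s x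
  exact (pow_le_pow_iff_left₀ (norm_nonneg _) (by positivity) two_ne_zero).1 hsq

end OrthogonalIdempotents

end Projections

theorem mul_sum_smul_sub_sum_smul_mul {R A ι : Type*} [CommRing R] [Ring A] [Module R A]
    [IsScalarTower R A A] [SMulCommClass R A A] {s : Finset ι} {P : ι → A}
    (hP : ∑ i ∈ s, P i = 1) (c : ι → R) (K : A) :
    K * (∑ j ∈ s, c j • P j) - (∑ i ∈ s, c i • P i) * K
      = ∑ i ∈ s, ∑ j ∈ s, (c j - c i) • (P i * K * P j) :=
  calc K * (∑ j ∈ s, c j • P j) - (∑ i ∈ s, c i • P i) * K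
      = ∑ j ∈ s, c j • (K * P j) - ∑ i ∈ s, c i • (P i * K) := by
        simp only [mul_sum, sum_mul, mul_smul_comm, smul_mul_assoc]
    _ = ∑ j ∈ s, c j • ∑ i ∈ s, P i * K * P j
          - ∑ i ∈ s, c i • ∑ j ∈ s, P i * K * P j := by
        simp only [← sum_mul, ← mul_sum, hP, one_mul, mul_one]
    _ = ∑ i ∈ s, ∑ j ∈ s, (c j - c i) • (P i * K * P j) := by
        simp only [smul_sum, sub_smul, sum_sub_distrib]
        rw [sum_comm]

theorem sum_eq_sum_Icc_add {M : Type*} [AddCommMonoid M] {s : Finset ℤ} {g : ℤ → M} (m : ℤ)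
    (L : ℕ) (hs : ∀ n ∉ s, g n = 0) (hband : ∀ n, (L : ℤ) < |n - m| → g n = 0) :
    ∑ n ∈ s, g n = ∑ d ∈ Icc (-(L : ℤ)) L, g (m + d) := by
  rw [← finsum_eq_sum_of_support_subset g fun n hn => ?_,
    ← finsum_comp_equiv (Equiv.addLeft m), finsum_eq_sum_of_support_subset _ fun d hd => ?_]
  · rfl
  · by_contra h
    refine hd (hband _ ?_)
    simp only [coe_Icc, Set.mem_Icc, Equiv.coe_addLeft, add_sub_cancel_left, lt_abs] at h ⊢
    omega
  · by_contra h
    exact hn (hs n h)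

theorem mul_sum_smul_sub_sum_smul_mul_eq_sum_Icc {R A : Type*} [CommRing R] [Ring A]
    [Module R A] [IsScalarTower R A A] [SMulCommClass R A A] {s : Finset ℤ} {P : ℤ → A}
    (hP : ∑ m ∈ s, P m = 1) (hPs : ∀ m ∉ s, P m = 0) (L : ℕ) {K : A}
    (hK : ∀ m m' : ℤ, (L : ℤ) < |m - m'| → P m * K * P m' = 0)
    {c : ℤ → R} {ε : R} (hc : ∀ m d, c (m + d) - c m = d * ε) :
    K * (∑ m ∈ s, c m • P m) - (∑ m ∈ s, c m • P m) * K
      = ∑ d ∈ Icc (-(L : ℤ)) L, ((d : R) * ε) • ∑ m ∈ s, P m * K * P (m + d) := by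
  rw [mul_sum_smul_sub_sum_smul_mul hP]
  calc ∑ m ∈ s, ∑ m' ∈ s, (c m' - c m) • (P m * K * P m')
      = ∑ m ∈ s, ∑ d ∈ Icc (-(L : ℤ)) L, ((d : R) * ε) • (P m * K * P (m + d)) := by
        refine sum_congr rfl fun m _ => ?_
        rw [sum_eq_sum_Icc_add m L (fun n hn => by simp [hPs n hn])
          fun n hn => by rw [hK m n (by rwa [abs_sub_comm]), smul_zero]]
        simp only [hc]
    _ = ∑ d ∈ Icc (-(L : ℤ)) L, ((d : R) * ε) • ∑ m ∈ s, P m * K * P (m + d) := by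
        rw [sum_comm]
        simp only [smul_sum]

theorem sum_Icc_neg_abs (L : ℕ) : ∑ d ∈ Icc (-(L : ℤ)) L, |d| = L * (L + 1) := by
  induction L with
  | zero => simp
  | succ L ih =>
    have hIcc : Icc (-(L + 1 : ℤ)) (L + 1) =
        insert (-(L + 1 : ℤ)) (insert ((L : ℤ) + 1) (Icc (-(L : ℤ)) L)) := by
      ext d; simp only [mem_Icc, mem_insert]; omega
    push_cast
    rw [hIcc, sum_insert (by simp; omega), sum_insert (by simp), ih, abs_neg,
      abs_of_nonneg (by positivity)]
    ring

theorem norm_sum_Icc_smul_le {F : Type*} [SeminormedAddCommGroup F] [NormedSpace ℝ F]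
    {ε C : ℝ} (hε : 0 ≤ ε) (L : ℕ) {B : ℤ → F} (hB : ∀ d, ‖B d‖ ≤ C) :
    ‖∑ d ∈ Icc (-(L : ℤ)) L, ((d : ℝ) * ε) • B d‖ ≤ ε * L * (L + 1) * C :=
  calc ‖∑ d ∈ Icc (-(L : ℤ)) L, ((d : ℝ) * ε) • B d‖
      ≤ ∑ d ∈ Icc (-(L : ℤ)) L, |(d : ℝ)| * (ε * C) := by
        refine (norm_sum_le _ _).trans (sum_le_sum fun d _ => ?_)
        rw [norm_smul, Real.norm_eq_abs, abs_mul, abs_of_nonneg hε, mul_assoc]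
        gcongr
        exact hB d
    _ = ε * L * (L + 1) * C := by
        have habs : ∑ d ∈ Icc (-(L : ℤ)) L, |(d : ℝ)| = L * (L + 1) := by
          exact_mod_cast sum_Icc_neg_abs L
        rw [← sum_mul, habs]
        ring

/-- For a resolution of the identity `(Π_m)_{m ∈ ℤ}` by pairwise orthogonal projections (finitely
many nonzero), `H' = Σ_m (m + 1/2) ε Π_m`, and an operator `K` that is banded with bandwidth `L`
(`Π_m K Π_{m'} = 0` whenever `|m − m'| > L`), one has `‖[K, H']‖ ≤ ε L (L+1) ‖K‖`. -/
theorem banded_commutator_bound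
    {E : Type*} [NormedAddCommGroup E] [InnerProductSpace ℂ E] [FiniteDimensional ℂ E]
    (ε : ℝ) (hε : 0 < ε) (L : ℕ)
    (Pr : ℤ → (E →L[ℂ] E))
    (hproj : ∀ m : ℤ, IsSelfAdjoint (Pr m) ∧ Pr m * Pr m = Pr m)
    (horth : ∀ m m' : ℤ, m ≠ m' → Pr m * Pr m' = 0)
    (hfin : {m : ℤ | Pr m ≠ 0}.Finite)
    (hres : ∑ᶠ m : ℤ, Pr m = 1)
    (H' : E →L[ℂ] E) (hH' : H' = ∑ᶠ m : ℤ, (((m : ℝ) + 1 / 2) * ε) • Pr m)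
    (K : E →L[ℂ] E)
    (hband : ∀ m m' : ℤ, (L : ℤ) < |m - m'| → Pr m * K * Pr m' = 0) :
    ‖K * H' - H' * K‖ ≤ ε * L * (L + 1) * ‖K‖ := by
  set s := hfin.toFinset
  have hPs : ∀ m ∉ s, Pr m = 0 := fun m hm => by simpa [s] using hm
  have hres' : ∑ m ∈ s, Pr m = 1 := by rw [← hres, finsum_eq_sum Pr hfin]; rfl
  have hH : H' = ∑ m ∈ s, (((m : ℝ) + 1 / 2) * ε) • Pr m := by
    refine hH'.trans (finsum_eq_sum_of_support_subset _ fun m hm => ?_)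
    simpa [s] using right_ne_zero_of_smul hm
  have hP : OrthogonalIdempotents Pr := ⟨fun m => (hproj m).2, horth⟩
  rw [hH, mul_sum_smul_sub_sum_smul_mul_eq_sum_Icc hres' hPs L hband fun m d => by push_cast; ring]
  exact norm_sum_Icc_smul_le hε.le L fun d =>
    hP.norm_sum_mul_mul_le (fun m => (hproj m).1)
      ((OrthogonalIdempotents.equiv (Equiv.addRight d)).2 hP) (fun m => (hproj _).1) s K
end
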